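/- Let S be a subset of ω₁. Then: (1) if S is compact then cof(K(S)) = 1; (2) if S is bounded in ω₁, not compact, and cl(S) \ S is closed in ω₁, then cof(K(S)) = ω; (3) if S is unbounded in ω₁ and cl(S) \ S is closed in ω₁, then cof(K(S)) = ω₁; (4) if cl(S) \ S is not closed in ω₁, then cof(K(S)) = 𝔡. -/

import Mathlib

open Cardinal Set

universe u v

/-- `C` is cofinal for `P'` in `P`: every element of `P'` lies below some element of `C`. -/
def IsCofinalFor' {P : Type u} [Preorder P] (P' C : Set P) : Prop :=
  ∀ p ∈ P', ∃ c ∈ C, p ≤ c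

/-- `φ : P → Q` is a relative Tukey quotient from `(P', P)` to `(Q', Q)`:
it maps every subset of `P` cofinal for `P'` to a subset of `Q` cofinal for `Q'`. -/
def IsRelTukeyQuotient {P : Type u} {Q : Type v} [Preorder P] [Preorder Q]
    (P' : Set P) (Q' : Set Q) (φ : P → Q) : Prop :=
  ∀ C : Set P, IsCofinalFor' P' C → IsCofinalFor' Q' (φ '' C)

/-- `(P', P) ≥_T (Q', Q)`: there exists a relative Tukey quotient. -/
def RelTukeyGE {P : Type u} {Q : Type v} [Preorder P] [Preorder Q]
    (P' : Set P) (Q' : Set Q) : Prop :=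
  ∃ φ : P → Q, IsRelTukeyQuotient P' Q' φ

/-- `P ≥_T Q`: there is a Tukey quotient from `P` to `Q`. -/
def TukeyGE (P : Type u) (Q : Type v) [Preorder P] [Preorder Q] : Prop :=
  RelTukeyGE (Set.univ : Set P) (Set.univ : Set Q)

/-- `A` is unbounded in `P`: it has no upper bound in `P`. -/
def UnboundedIn {P : Type u} [Preorder P] (A : Set P) : Prop :=
  ¬ ∃ b : P, ∀ a ∈ A, a ≤ b

noncomputable section

/-- `ω₁`: the set of countable ordinals, as the canonical well-order of order type `ω₁`. -/
def O1 : Type := (Cardinal.aleph 1).ord.ToType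

noncomputable instance : LinearOrder O1 :=
  inferInstanceAs (LinearOrder (Cardinal.aleph 1).ord.ToType)

/-- `ω₁` carries its order topology. -/
instance : TopologicalSpace O1 := Preorder.topology O1

instance : OrderTopology O1 := ⟨rfl⟩

/-- `K(S)` for `S ⊆ ω₁`: the compact subsets of `S` (equivalently, compact subsets of `ω₁`
contained in `S`), ordered by inclusion. -/
def KS (S : Set O1) : Type := {K : Set O1 // K ⊆ S ∧ IsCompact K}

instance (S : Set O1) : PartialOrder (KS S) := Subtype.partialOrder _

/-- `A ⊆ ω₁` is bounded in `ω₁`. -/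
def BddO1 (A : Set O1) : Prop := ∃ β : O1, ∀ x ∈ A, x ≤ β

/-- `cof(P)`: the least cardinality of a cofinal subset of `P`. -/
noncomputable def cofOf (P : Type u) [Preorder P] : Cardinal.{u} :=
  sInf {c : Cardinal.{u} | ∃ C : Set P, IsCofinalFor' Set.univ C ∧ #↥C = c}

/-- `𝔡`: the least cardinality of a dominating (cofinal) family in `ω^ω` with the
pointwise order. -/
noncomputable def frakD : Cardinal :=
  sInf {c : Cardinal | ∃ D : Set (ℕ → ℕ), (∀ f : ℕ → ℕ, ∃ g ∈ D, f ≤ g) ∧ #↥D = c}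


/-!
A compact subset of `ω₁` is closed and bounded, hence countable. Write `F = cl(S) \ S`. A compact
`K ⊆ S` avoids every `a ∈ F`, so it misses a whole interval `(l, a]`; conversely, removing from
`cl(S ∩ [0, β])` an open set that covers `F ∩ [0, β]` leaves a compact subset of `S`. If `F` is
closed, `F ∩ [0, β]` is compact, so finitely many intervals with endpoints `≤ β` suffice and
`K(S ∩ [0, β])` has a countable cofinal family. In general, removing `(u_n(f n), a_n]`, where `u_n`
increases to the `n`-th point `a_n` of `F ∩ [0, β]`, gives a cofinal family indexed monotonically by
`ω^ω`. A union over `β ∈ ω₁` then bounds `cof(K(S))` by `ℵ₁` when `F` is closed and by `ℵ₁ · 𝔡 = 𝔡`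
always (for bounded `S` one `β` suffices, giving `ℵ₀`). The matching lower bounds `ℵ₀` and `ℵ₁` hold
because finitely (countably) many compact sets cover only a compact (bounded) set.

If `F` is not closed, pick `x ∈ cl(F) \ F`, which lies in `S`, points `x_n ∈ F` increasing to `x`,
and sequences `y_n` of `S` in `(x_n, x_{n+1})` converging to `x_{n+1}`. Each comb
`{x} ∪ {y_n(m) : m ≤ f(n)}` is a compact subset of `S`, while a compact `K ⊆ S` contains only
finitely many terms of each `y_n`; so a cofinal family in `K(S)` yields a dominating family of at
most the same size.
-/

open Filter Topology

section SuccOrderTopology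

variable {α : Type*} [LinearOrder α] [TopologicalSpace α] [OrderTopology α] [SuccOrder α]

theorem mem_closure_inter_Ioo_of_mem_closure_diff {A : Set α} {a l : α} (ha : a ∈ closure A \ A)
    (hl : l < a) : a ∈ closure (A ∩ Ioo l a) := by
  refine mem_closure_iff_nhds.2 fun t ht => ?_
  have hIoc : Ioc l a ∈ 𝓝 a := (SuccOrder.hasBasis_nhds_Ioc_of_exists_lt ⟨l, hl⟩).mem_of_mem hl
  obtain ⟨z, ⟨hzt, hz⟩, hzA⟩ := mem_closure_iff_nhds.1 ha.1 _ (inter_mem ht hIoc)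
  exact ⟨z, hzt, hzA, hz.1, hz.2.lt_of_ne (ne_of_mem_of_not_mem hzA ha.2)⟩

theorem exists_seq_strictMono_tendsto_of_mem_closure_diff [FirstCountableTopology α]
    {A : Set α} {a l : α} (ha : a ∈ closure A \ A) (hl : l < a) :
    ∃ u : ℕ → α, StrictMono u ∧ (∀ n, u n ∈ A ∩ Ioo l a) ∧ Tendsto u atTop (𝓝 a) := by
  have hcl := mem_closure_inter_Ioo_of_mem_closure_diff ha hl
  obtain ⟨u, hu, -, hlim, hmem⟩ :=
    (isLUB_of_mem_closure (fun z hz => hz.2.2.le) hcl).exists_seq_strictMono_tendsto_of_notMem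
      (fun h => h.2.2.false) (closure_nonempty_iff.1 ⟨a, hcl⟩)
  exact ⟨u, hu, hmem, hlim⟩

variable [NoMaxOrder α]

theorem isOpen_Ioc_of_succOrder (a b : α) : IsOpen (Ioc a b) :=
  Order.Ioo_succ_right a b ▸ isOpen_Ioo

theorem isOpen_Iic_of_succOrder (a : α) : IsOpen (Iic a) :=
  Order.Iio_succ a ▸ isOpen_Iio

theorem firstCountableTopology_of_countable_Iio (h : ∀ a : α, (Iio a).Countable) :
    FirstCountableTopology α where
  nhds_generated_countable a := by
    by_cases ha : IsMin a
    · rw [SuccOrder.nhds_of_isMin ha]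
      infer_instance
    · exact HasCountableBasis.isCountablyGenerated
        ⟨SuccOrder.hasBasis_nhds_Ioc_of_exists_lt (not_isMin_iff.1 ha), h a⟩

theorem exists_lt_of_mem_closure_diff {A : Set α} {a : α} (ha : a ∈ closure A \ A) :
    ∃ l, l < a := by
  by_contra! h
  have hnhds : {a} ∈ 𝓝 a := by
    rw [SuccOrder.nhds_of_isMin fun b _ => h b]
    exact mem_pure.2 rfl
  obtain ⟨z, rfl, hz⟩ := mem_closure_iff_nhds.1 ha.1 _ hnhds
  exact ha.2 hz

theorem exists_Ioc_disjoint_of_mem_closure_diff {T K : Set α} (hK : IsClosed K) (hKT : K ⊆ T)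
    {a : α} (ha : a ∈ closure T \ T) : ∃ l < a, Disjoint (Ioc l a) K := by
  obtain ⟨l, hl, hsub⟩ := (SuccOrder.hasBasis_nhds_Ioc_of_exists_lt
    (exists_lt_of_mem_closure_diff ha)).mem_iff.1 (hK.isOpen_compl.mem_nhds fun h => ha.2 (hKT h))
  exact ⟨l, hl, disjoint_left.2 fun _ hx hxK => hsub hx hxK⟩

theorem isClosed_of_finite_inter_Iic {A : Set α} {x : α} (hx : x ∈ A) (hAx : A ⊆ Iic x)
    (hfin : ∀ z < x, (A ∩ Iic z).Finite) : IsClosed A := by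
  refine closure_subset_iff_isClosed.1 fun z hz => ?_
  rcases (isClosed_Iic.closure_subset_iff.2 hAx hz : z ≤ x).eq_or_lt with rfl | hzx
  · exact hx
  · have hz' := (isOpen_Iic_of_succOrder z).inter_closure ⟨le_rfl, hz⟩
    rw [inter_comm, (hfin z hzx).isClosed.closure_eq] at hz'
    exact hz'.1

end SuccOrderTopology

theorem isCompact_iff_isClosed_bddAbove {α : Type*} [ConditionallyCompleteLinearOrderBot α]
    [TopologicalSpace α] [OrderTopology α] {K : Set α} : IsCompact K ↔ IsClosed K ∧ BddAbove K :=
  ⟨fun h => ⟨h.isClosed, h.bddAbove⟩, fun ⟨hc, _, hb⟩ =>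
    isCompact_Icc.of_isClosed_subset hc fun _ hx => ⟨bot_le, hb hx⟩⟩

theorem isClosed_closure_inter_diff {X : Type*} [TopologicalSpace X] {S C : Set X}
    (hC : IsClosed C) (hS : IsClosed (closure S \ S)) :
    IsClosed (closure (S ∩ C) \ (S ∩ C)) := by
  have hsub : closure (S ∩ C) ⊆ closure S ∩ C :=
    closure_minimal (inter_subset_inter_left C subset_closure) (isClosed_closure.inter hC)
  have : closure (S ∩ C) \ (S ∩ C) = closure (S ∩ C) ∩ (closure S \ S) := by
    ext x
    constructor
    · rintro ⟨hx, hxSC⟩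
      exact ⟨hx, (hsub hx).1, fun hxS => hxSC ⟨hxS, (hsub hx).2⟩⟩
    · rintro ⟨hx, -, hxS⟩
      exact ⟨hx, fun h => hxS h.1⟩
  rw [this]
  exact isClosed_closure.inter hS

namespace O1

instance : WellFoundedLT O1 := inferInstanceAs (WellFoundedLT (ℵ₁ : Cardinal).ord.ToType)

theorem mk_eq : #O1 = ℵ₁ := mk_ord_toType _

instance : Nonempty O1 := by
  rw [← mk_ne_zero_iff, mk_eq]
  exact (aleph_pos 1).ne'

instance : OrderBot O1 := WellFoundedLT.toOrderBot O1

instance : ConditionallyCompleteLinearOrderBot O1 :=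
  WellFoundedLT.conditionallyCompleteLinearOrderBot O1

instance : SuccOrder O1 := SuccOrder.ofLinearWellFoundedLT O1

theorem countable_Iio (x : O1) : (Iio x).Countable :=
  le_aleph0_iff_set_countable.1 <| lt_aleph_one_iff.1 <|
    mk_eq ▸ mk_Iio_lt x (by rw [mk_eq]; exact (Ordinal.type_toType _).symm)

theorem countable_Iic (x : O1) : (Iic x).Countable := by
  rw [← Iio_insert]
  exact (countable_Iio x).insert x

theorem not_countable_univ : ¬ (univ : Set O1).Countable := by
  rw [← le_aleph0_iff_set_countable, mk_univ, mk_eq]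
  exact not_le.2 aleph0_lt_aleph_one

theorem bddAbove_iff_countable {A : Set O1} : BddAbove A ↔ A.Countable := by
  refine ⟨fun ⟨b, hb⟩ => (countable_Iic b).mono hb, fun hA => ?_⟩
  by_contra h
  refine not_countable_univ ((hA.biUnion fun a _ => countable_Iic a).mono fun x _ => ?_)
  obtain ⟨a, ha, hxa⟩ := not_bddAbove_iff.1 h x
  exact mem_biUnion ha hxa.le

instance : NoMaxOrder O1 :=
  ⟨fun x => (not_bddAbove_iff.1 (mt bddAbove_iff_countable.1 not_countable_univ) x).imp
    fun _ h => h.2⟩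

instance : FirstCountableTopology O1 := firstCountableTopology_of_countable_Iio countable_Iio

end O1

section Cofinality

theorem cofOf_le_mk {P : Type u} [Preorder P] {C : Set P} (hC : IsCofinalFor' univ C) :
    cofOf P ≤ #C :=
  csInf_le' ⟨C, hC, rfl⟩

theorem exists_isCofinalFor'_mk_eq_cofOf (P : Type u) [Preorder P] :
    ∃ C : Set P, IsCofinalFor' univ C ∧ #C = cofOf P :=
  csInf_mem (s := {c | ∃ C : Set P, IsCofinalFor' univ C ∧ #C = c})
    ⟨_, univ, fun p _ => ⟨p, trivial, le_rfl⟩, rfl⟩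

theorem cofOf_eq_one_of_isTop {P : Type u} [Preorder P] {a : P} (ha : IsTop a) : cofOf P = 1 := by
  refine le_antisymm ?_ ?_
  · exact (cofOf_le_mk (C := {a}) fun p _ => ⟨a, rfl, ha p⟩).trans_eq (mk_singleton a)
  · obtain ⟨C, hC, hCP⟩ := exists_isCofinalFor'_mk_eq_cofOf P
    obtain ⟨c, hc, -⟩ := hC a trivial
    rw [← hCP, Cardinal.one_le_iff_ne_zero, mk_ne_zero_iff]
    exact ⟨⟨c, hc⟩⟩

theorem frakD_le_mk {D : Set (ℕ → ℕ)} (hD : ∀ f : ℕ → ℕ, ∃ g ∈ D, f ≤ g) : frakD ≤ #D :=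
  csInf_le' ⟨D, hD, rfl⟩

theorem exists_dominating_mk_eq_frakD :
    ∃ D : Set (ℕ → ℕ), (∀ f : ℕ → ℕ, ∃ g ∈ D, f ≤ g) ∧ #D = frakD :=
  csInf_mem (s := {c | ∃ D : Set (ℕ → ℕ), (∀ f : ℕ → ℕ, ∃ g ∈ D, f ≤ g) ∧ #D = c})
    ⟨_, univ, fun f => ⟨f, trivial, le_rfl⟩, rfl⟩

theorem aleph0_lt_frakD : ℵ₀ < frakD := by
  obtain ⟨D, hD, hDd⟩ := exists_dominating_mk_eq_frakD
  rw [← hDd, lt_iff_not_ge, le_aleph0_iff_set_countable]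
  intro hc
  obtain ⟨e, rfl⟩ := hc.exists_eq_range ((hD 0).imp fun _ h => h.1)
  obtain ⟨-, ⟨i, rfl⟩, hle⟩ := hD fun n => e n n + 1
  exact (hle i).not_gt (Nat.lt_succ_self _)

theorem aleph_one_le_frakD : ℵ₁ ≤ frakD :=
  succ_aleph0 ▸ Order.succ_le_of_lt aleph0_lt_frakD

theorem frakD_le_cofOf {P : Type} [Preorder P] (φ : (ℕ → ℕ) → P) (ψ : P → ℕ → ℕ)
    (h : ∀ f p, φ f ≤ p → f ≤ ψ p) : frakD ≤ cofOf P := by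
  obtain ⟨C, hC, hCP⟩ := exists_isCofinalFor'_mk_eq_cofOf P
  refine hCP ▸ (frakD_le_mk (D := ψ '' C) fun f => ?_).trans mk_image_le
  obtain ⟨c, hc, hfc⟩ := hC (φ f) trivial
  exact ⟨ψ c, mem_image_of_mem ψ hc, h f c hfc⟩

end Cofinality

section CompactCofinal

def IsCompactCofinal {X : Type*} [TopologicalSpace X] (T : Set X) (𝒞 : Set (Set X)) : Prop :=
  (∀ L ∈ 𝒞, L ⊆ T ∧ IsCompact L) ∧ ∀ K ⊆ T, IsCompact K → ∃ L ∈ 𝒞, K ⊆ L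

theorem cofOf_KS_le_mk {S : Set O1} {𝒞 : Set (Set O1)} (h : IsCompactCofinal S 𝒞) :
    cofOf (KS S) ≤ #𝒞 := by
  let ι : 𝒞 → KS S := fun L => ⟨L, h.1 L L.2⟩
  refine (cofOf_le_mk (C := range ι) fun K _ => ?_).trans mk_range_le
  obtain ⟨L, hL, hKL⟩ := h.2 K.1 K.2.1 K.2.2
  exact ⟨ι ⟨L, hL⟩, mem_range_self _, hKL⟩

theorem isCompactCofinal_iUnion_Iic {S : Set O1} {𝒞 : O1 → Set (Set O1)}
    (h : ∀ β, IsCompactCofinal (S ∩ Iic β) (𝒞 β)) : IsCompactCofinal S (⋃ β, 𝒞 β) := by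
  refine ⟨fun L hL => ?_, fun K hKS hK => ?_⟩
  · obtain ⟨β, hβ⟩ := mem_iUnion.1 hL
    exact ⟨((h β).1 L hβ).1.trans inter_subset_left, ((h β).1 L hβ).2⟩
  · obtain ⟨β, hβ⟩ := hK.bddAbove
    obtain ⟨L, hL, hKL⟩ := (h β).2 K (subset_inter hKS hβ) hK
    exact ⟨L, mem_iUnion.2 ⟨β, hL⟩, hKL⟩

theorem cofOf_KS_le_aleph_one_mul {S : Set O1} {κ : Cardinal}
    (h : ∀ β : O1, ∃ 𝒞, IsCompactCofinal (S ∩ Iic β) 𝒞 ∧ #𝒞 ≤ κ) : cofOf (KS S) ≤ ℵ₁ * κ := by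
  choose 𝒞 h𝒞 hκ using h
  calc cofOf (KS S) ≤ #(⋃ β, 𝒞 β) := cofOf_KS_le_mk (isCompactCofinal_iUnion_Iic h𝒞)
    _ ≤ #O1 * ⨆ β, #(𝒞 β) := mk_iUnion_le _
    _ ≤ ℵ₁ * κ := mul_le_mul' O1.mk_eq.le (ciSup_le' hκ)

theorem subset_biUnion_of_isCofinalFor' {S : Set O1} {C : Set (KS S)}
    (hC : IsCofinalFor' univ C) : S ⊆ ⋃ c ∈ C, (c : KS S).1 := fun z hz => by
  obtain ⟨c, hc, hzc⟩ := hC ⟨{z}, singleton_subset_iff.2 hz, isCompact_singleton⟩ trivial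
  exact mem_biUnion hc (hzc rfl)

theorem exists_countable_isCompactCofinal {T : Set O1} (hT : BddAbove T)
    (hF : IsClosed (closure T \ T)) : ∃ 𝒞 : Set (Set O1), 𝒞.Countable ∧ IsCompactCofinal T 𝒞 := by
  obtain ⟨β, hβ⟩ := hT.closure
  have hcl : IsCompact (closure T) := isCompact_iff_isClosed_bddAbove.2 ⟨isClosed_closure, β, hβ⟩
  have hFc : IsCompact (closure T \ T) := hcl.of_isClosed_subset hF sdiff_subset
  let U : Set (O1 × O1) → Set O1 := fun G => ⋃ p ∈ G, Ioc p.1 p.2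
  let 𝒢 := {G | G.Finite ∧ G ⊆ Iic β ×ˢ Iic β ∧ closure T \ T ⊆ U G}
  refine ⟨(fun G => closure T \ U G) '' 𝒢, ?_, ?_, fun K hKT hK => ?_⟩
  · refine ((countable_ofPred_finite_subset ((O1.countable_Iic β).prod
      (O1.countable_Iic β))).mono fun _ hG => And.intro hG.1 hG.2.1).image _
  · rintro _ ⟨G, hG, rfl⟩
    exact ⟨sdiff_subset_comm.1 hG.2.2,
      hcl.diff (isOpen_biUnion fun p _ => isOpen_Ioc_of_succOrder _ _)⟩
  · obtain ⟨G, hGsub, hGfin, hcover⟩ := hFc.elim_finite_subcover_image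
      (b := {p : O1 × O1 | p.2 ∈ closure T \ T ∧ p.1 < p.2 ∧ Disjoint (Ioc p.1 p.2) K})
      (c := fun p => Ioc p.1 p.2) (fun p _ => isOpen_Ioc_of_succOrder _ _) fun a ha => by
        obtain ⟨l, hl, hdisj⟩ := exists_Ioc_disjoint_of_mem_closure_diff hK.isClosed hKT ha
        exact mem_biUnion (x := (l, a)) ⟨ha, hl, hdisj⟩ ⟨hl, le_rfl⟩
    have hGβ : G ⊆ Iic β ×ˢ Iic β := fun p hp =>
      have hp2 : p.2 ≤ β := hβ (hGsub hp).1.1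
      ⟨(hGsub hp).2.1.le.trans hp2, hp2⟩
    exact ⟨closure T \ U G, mem_image_of_mem _ ⟨hGfin, hGβ, hcover⟩,
      subset_sdiff.2 ⟨hKT.trans subset_closure, disjoint_iUnion₂_right.2 fun p hp =>
        (hGsub hp).2.2.symm⟩⟩

theorem exists_monotone_isCompactCofinal {T : Set O1} (hT : BddAbove T) :
    ∃ Φ : (ℕ → ℕ) → Set O1, Monotone Φ ∧ IsCompactCofinal T (range Φ) := by
  have hcl : IsCompact (closure T) :=
    isCompact_iff_isClosed_bddAbove.2 ⟨isClosed_closure, hT.closure⟩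
  have : Countable ↥(closure T \ T) :=
    (O1.bddAbove_iff_countable.1 (hT.closure.mono sdiff_subset)).to_subtype
  obtain ⟨e, he⟩ := exists_injective_nat ↥(closure T \ T)
  have hseq : ∀ a : ↥(closure T \ T), ∃ u : ℕ → O1,
      StrictMono u ∧ (∀ n, u n < a) ∧ Tendsto u atTop (𝓝 a) := fun a => by
    obtain ⟨l, hl⟩ := exists_lt_of_mem_closure_diff a.2
    obtain ⟨u, hu, hmem, hlim⟩ := exists_seq_strictMono_tendsto_of_mem_closure_diff a.2 hl
    exact ⟨u, hu, fun n => (hmem n).2.2, hlim⟩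
  choose u hu hua hlim using hseq
  let Φ : (ℕ → ℕ) → Set O1 := fun f => closure T \ ⋃ a, Ioc (u a (f (e a))) a
  refine ⟨Φ, fun f g hfg => sdiff_subset_sdiff_right (iUnion_mono fun a =>
    Ioc_subset_Ioc_left ((hu a).monotone (hfg _))), ?_, fun K hKT hK => ?_⟩
  · rintro _ ⟨f, rfl⟩
    exact ⟨sdiff_subset_comm.1 fun a ha => mem_iUnion.2 ⟨⟨a, ha⟩, hua _ _, le_rfl⟩,
      hcl.diff (isOpen_iUnion fun a => isOpen_Ioc_of_succOrder _ _)⟩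
  · have hgap : ∀ a, ∃ m, Disjoint (Ioc (u a m) a) K := fun a => by
      obtain ⟨l, hl, hdisj⟩ := exists_Ioc_disjoint_of_mem_closure_diff hK.isClosed hKT a.2
      obtain ⟨m, hm⟩ := ((hlim a).eventually (lt_mem_nhds hl)).exists
      exact ⟨m, hdisj.mono_left (Ioc_subset_Ioc_left hm.le)⟩
    choose m hm using hgap
    refine ⟨Φ (Function.extend e m 0), mem_range_self _,
      subset_sdiff.2 ⟨hKT.trans subset_closure, disjoint_iUnion_right.2 fun a => ?_⟩⟩
    rw [he.extend_apply]
    exact (hm a).symm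

theorem exists_strictMono_tendsto_of_not_isClosed {S : Set O1}
    (hF : ¬IsClosed (closure S \ S)) : ∃ x ∈ S, ∃ xs : ℕ → O1,
      StrictMono xs ∧ (∀ n, xs n ∈ closure S \ S) ∧ Tendsto xs atTop (𝓝 x) := by
  obtain ⟨x, hxF, hx⟩ : ∃ x ∈ closure (closure S \ S), x ∉ closure S \ S := by
    by_contra! h
    exact hF (closure_subset_iff_isClosed.1 h)
  have hxS : x ∈ S := by_contra fun h => hx ⟨closure_minimal sdiff_subset isClosed_closure hxF, h⟩
  obtain ⟨l, hl⟩ := exists_lt_of_mem_closure_diff ⟨hxF, hx⟩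
  obtain ⟨xs, hxs, hmem, hlim⟩ := exists_seq_strictMono_tendsto_of_mem_closure_diff ⟨hxF, hx⟩ hl
  exact ⟨x, hxS, xs, hxs, fun n => (hmem n).1, hlim⟩

theorem isCompact_insert_iUnion_image_Iic {x : O1} {xs : ℕ → O1} (hxs : StrictMono xs)
    (hlim : Tendsto xs atTop (𝓝 x)) {y : ℕ → ℕ → O1} (hy : ∀ n m, y n m ∈ Ioo (xs n) (xs (n + 1)))
    (f : ℕ → ℕ) : IsCompact (insert x (⋃ n, y n '' Iic (f n))) := by
  have hyx : ∀ n m, y n m ≤ x := fun n m =>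
    (hy n m).2.le.trans (hxs.monotone.ge_of_tendsto hlim _)
  have hbdd : insert x (⋃ n, y n '' Iic (f n)) ⊆ Iic x :=
    insert_subset (mem_Iic.2 le_rfl) (iUnion_subset fun n => image_subset_iff.2 fun m _ => hyx n m)
  refine isCompact_iff_isClosed_bddAbove.2
    ⟨isClosed_of_finite_inter_Iic (mem_insert x _) hbdd fun z hz => ?_, x, hbdd⟩
  obtain ⟨N, hN⟩ := (hlim.eventually (lt_mem_nhds hz)).exists
  refine ((finite_Iio N).biUnion fun n _ => (finite_Iic (f n)).image (y n)).subset ?_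
  rintro w ⟨rfl | hw, hwz⟩
  · exact absurd hwz (not_le.2 hz)
  · obtain ⟨n, m, hm, rfl⟩ := mem_iUnion.1 hw
    refine mem_biUnion (mem_Iio.2 (not_le.1 fun hNn => ?_)) ⟨m, hm, rfl⟩
    exact (hwz.trans_lt hN).not_ge ((hxs.monotone hNn).trans (hy n m).1.le)

end CompactCofinal

section CofinalityOfKS

variable {S : Set O1}

theorem cofOf_KS_eq_one (hS : IsCompact S) : cofOf (KS S) = 1 :=
  cofOf_eq_one_of_isTop (a := ⟨S, subset_rfl, hS⟩) fun K => K.2.1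

theorem cofOf_KS_le_aleph0 (hS : BddAbove S) (hF : IsClosed (closure S \ S)) :
    cofOf (KS S) ≤ ℵ₀ := by
  obtain ⟨𝒞, hc, h𝒞⟩ := exists_countable_isCompactCofinal hS hF
  exact (cofOf_KS_le_mk h𝒞).trans (le_aleph0_iff_set_countable.2 hc)

theorem aleph0_le_cofOf_KS (hS : ¬IsCompact S) : ℵ₀ ≤ cofOf (KS S) := by
  obtain ⟨C, hC, hCS⟩ := exists_isCofinalFor'_mk_eq_cofOf (KS S)
  rw [← hCS]
  by_contra! hfin
  have hSC : S = ⋃ c ∈ C, (c : KS S).1 :=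
    (subset_biUnion_of_isCofinalFor' hC).antisymm (iUnion₂_subset fun c _ => c.2.1)
  exact hS (hSC ▸ (lt_aleph0_iff_set_finite.1 hfin).isCompact_biUnion fun c _ => c.2.2)

theorem cofOf_KS_le_aleph_one (hF : IsClosed (closure S \ S)) : cofOf (KS S) ≤ ℵ₁ := by
  refine (cofOf_KS_le_aleph_one_mul fun β => ?_).trans_eq
    (mul_eq_left (aleph0_le_aleph 1) (aleph0_le_aleph 1) aleph0_ne_zero)
  obtain ⟨𝒞, hc, h𝒞⟩ := exists_countable_isCompactCofinal (T := S ∩ Iic β)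
    ⟨β, fun _ h => h.2⟩ (isClosed_closure_inter_diff isClosed_Iic hF)
  exact ⟨𝒞, h𝒞, le_aleph0_iff_set_countable.2 hc⟩

theorem aleph_one_le_cofOf_KS (hS : ¬BddAbove S) : ℵ₁ ≤ cofOf (KS S) := by
  obtain ⟨C, hC, hCS⟩ := exists_isCofinalFor'_mk_eq_cofOf (KS S)
  rw [← hCS]
  by_contra! hlt
  have hCc : C.Countable := le_aleph0_iff_set_countable.1 (lt_aleph_one_iff.1 hlt)
  exact hS (O1.bddAbove_iff_countable.2 ((hCc.biUnion fun c _ =>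
    O1.bddAbove_iff_countable.1 c.2.2.bddAbove).mono (subset_biUnion_of_isCofinalFor' hC)))

theorem cofOf_KS_le_frakD : cofOf (KS S) ≤ frakD := by
  obtain ⟨D, hD, hDd⟩ := exists_dominating_mk_eq_frakD
  refine (cofOf_KS_le_aleph_one_mul fun β => ?_).trans_eq
    (mul_eq_right aleph0_lt_frakD.le aleph_one_le_frakD (aleph_pos 1).ne')
  obtain ⟨Φ, hΦ, hcof⟩ := exists_monotone_isCompactCofinal (T := S ∩ Iic β) ⟨β, fun _ h => h.2⟩
  refine ⟨Φ '' D, ⟨fun L hL => hcof.1 L (image_subset_range Φ D hL), fun K hKS hK => ?_⟩,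
    hDd ▸ mk_image_le⟩
  obtain ⟨_, ⟨f, rfl⟩, hKf⟩ := hcof.2 K hKS hK
  obtain ⟨g, hg, hfg⟩ := hD f
  exact ⟨Φ g, mem_image_of_mem Φ hg, hKf.trans (hΦ hfg)⟩

theorem frakD_le_cofOf_KS (hF : ¬IsClosed (closure S \ S)) : frakD ≤ cofOf (KS S) := by
  obtain ⟨x, hxS, xs, hxs, hxsF, hlim⟩ := exists_strictMono_tendsto_of_not_isClosed hF
  choose y _ hy hylim using fun n =>
    exists_seq_strictMono_tendsto_of_mem_closure_diff (hxsF (n + 1)) (hxs n.lt_succ_self)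
  let comb : (ℕ → ℕ) → KS S := fun f => ⟨insert x (⋃ n, y n '' Iic (f n)),
    insert_subset hxS (iUnion_subset fun n => image_subset_iff.2 fun m _ => (hy n m).1),
    isCompact_insert_iUnion_image_Iic hxs hlim (fun n m => (hy n m).2) f⟩
  have hfin : ∀ (K : KS S) n, ∃ N, ∀ m, y n m ∈ K.1 → m < N := fun K n => by
    have hxK : xs (n + 1) ∉ K.1 := fun h => (hxsF (n + 1)).2 (K.2.1 h)
    obtain ⟨N, hN⟩ := ((hylim n).eventually
      (K.2.2.isClosed.isOpen_compl.mem_nhds hxK)).exists_forall_of_atTop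
    exact ⟨N, fun m hm => not_le.1 fun hNm => hN m hNm hm⟩
  choose ψ hψ using hfin
  exact frakD_le_cofOf comb ψ fun f K hfK n =>
    (hψ K n (f n) (hfK (mem_insert_of_mem x (mem_iUnion.2 ⟨n, f n, mem_Iic.2 le_rfl, rfl⟩)))).le

end CofinalityOfKS

/-- For `S ⊆ ω₁`: (1) if `S` is compact then `cof(K(S)) = 1`; (2) if `S` is bounded, not
compact, and `cl(S) \ S` is closed in `ω₁`, then `cof(K(S)) = ω`; (3) if `S` is unbounded
and `cl(S) \ S` is closed in `ω₁`, then `cof(K(S)) = ω₁`; (4) if `cl(S) \ S` is not closed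
in `ω₁`, then `cof(K(S)) = 𝔡`. -/
theorem statement12 (S : Set O1) :
    (IsCompact S → cofOf (KS S) = 1) ∧
      (BddO1 S → ¬ IsCompact S → IsClosed (closure S \ S) → cofOf (KS S) = ℵ₀) ∧
      (¬ BddO1 S → IsClosed (closure S \ S) → cofOf (KS S) = Cardinal.aleph 1) ∧
      (¬ IsClosed (closure S \ S) → cofOf (KS S) = frakD) := by
  have hbdd : BddO1 S ↔ BddAbove S := Iff.rfl
  refine ⟨cofOf_KS_eq_one, fun hS hSc hF => ?_, fun hS hF => ?_, fun hF => ?_⟩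
  · exact (cofOf_KS_le_aleph0 (hbdd.1 hS) hF).antisymm (aleph0_le_cofOf_KS hSc)
  · exact (cofOf_KS_le_aleph_one hF).antisymm (aleph_one_le_cofOf_KS (mt hbdd.2 hS))
  · exact cofOf_KS_le_frakD.antisymm (frakD_le_cofOf_KS hF)
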